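/- Let Y be an integrable random vector in ℝ^d. Then E[Y] lies in the affine hull of the support of the law of Y. -/

import Mathlib

open MeasureTheory

/-- The support of a measure on `ℝ^d`: the set of points all of whose open
neighborhoods have positive measure. -/
def measSupport {d : ℕ} (μ : Measure (Fin d → ℝ)) : Set (Fin d → ℝ) :=
  {y | ∀ U : Set (Fin d → ℝ), IsOpen U → y ∈ U → μ U ≠ 0}

lemma measSupport_eq_support {d : ℕ} (μ : Measure (Fin d → ℝ)) :
    measSupport μ = μ.support := by
  ext y
  simp only [measSupport, Set.mem_ofPred_eq, (nhds_basis_opens y).mem_measureSupport,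
    pos_iff_ne_zero, and_imp]
  exact forall_congr' fun _ => imp.swap

theorem integral_mem_affineSpan_support_map {E Ω : Type*} [NormedAddCommGroup E]
    [NormedSpace ℝ E] [FiniteDimensional ℝ E] [MeasurableSpace E] [BorelSpace E]
    [MeasurableSpace Ω] (P : Measure Ω) [IsProbabilityMeasure P] {Y : Ω → E}
    (hY : Integrable Y P) :
    (∫ ω, Y ω ∂P) ∈ affineSpan ℝ (P.map Y).support := by
  set A := affineSpan ℝ (P.map Y).support
  have hA : IsClosed (A : Set E) := A.closed_of_finiteDimensional
  have hae_map : ∀ᵐ y ∂P.map Y, y ∈ A :=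
    Filter.mem_of_superset Measure.support_mem_ae (subset_affineSpan ℝ _)
  have hae : ∀ᵐ ω ∂P, Y ω ∈ A := (ae_map_iff hY.aemeasurable hA.measurableSet).mp hae_map
  exact A.convex.integral_mem hA hae hY

theorem mean_mem_affineSpan_support_general {d : ℕ}
    {Ω : Type*} [MeasurableSpace Ω] (P : Measure Ω) [IsProbabilityMeasure P]
    (Y : Ω → Fin d → ℝ) (hint : Integrable Y P) :
    (∫ ω, Y ω ∂P) ∈ affineSpan ℝ (measSupport (P.map Y)) := by
  rw [measSupport_eq_support]
  exact integral_mem_affineSpan_support_map P hint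

/-- The expectation of an integrable random vector lies in the affine hull of the
support of its law. -/
theorem mean_mem_affineSpan_support {d : ℕ}
    {Ω : Type*} [MeasurableSpace Ω] (P : Measure Ω) [IsProbabilityMeasure P]
    (Y : Ω → Fin d → ℝ) (hY : Measurable Y) (hint : Integrable Y P) :
    (∫ ω, Y ω ∂P) ∈ affineSpan ℝ (measSupport (P.map Y)) :=
  mean_mem_affineSpan_support_general P Y hint
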